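/- In the game G, suppose arccos(⟪θ*_A, θ*_D⟫) < π − arcsin(α/(1−α)). Let s = sign(⟪θ*_D, R θ*_A⟫), and define θ'_D = s · R θ*_A and θ'_A = (√(1 − 2α) · θ*_A − α s · R θ*_A)/(1 − α). Then s ≠ 0, both θ'_A and θ'_D are unit vectors, and (θ'_A, θ'_D) is a pure strategy Nash equilibrium of G; in particular a pure strategy Nash equilibrium exists. -/

import Mathlib

/-!
At the proposed profile the aggregate is `√(1 - 2α) θ*_A` before normalisation, so the attacker
already obtains the maximal payoff `1`. Put `f = s • R θ*_A`. When the defender deviates to `θ_D`,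
the unnormalised aggregate `α θ_D + √(1 - 2α) θ*_A - α f` runs over the circle of radius `α` around
a point of norm `1 - α`; seen from the origin it fills a sector of opening `2 arcsin (α / (1 - α))`
with one edge along `θ*_A` and lying on the side of `θ*_A` opposite to `θ*_D`. The angle hypothesis
says exactly that no direction of this sector is closer to `θ*_D` than `θ*_A` itself.
-/

open Real

/-- The aggregate vector `(α θ_D + (1−α) θ_A)/‖α θ_D + (1−α) θ_A‖`. -/
noncomputable def aggregate (α : ℝ) (θA θD : EuclideanSpace ℝ (Fin 2)) :
    EuclideanSpace ℝ (Fin 2) :=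
  (‖α • θD + (1 - α) • θA‖)⁻¹ • (α • θD + (1 - α) • θA)

/-- `(θA', θD')` is a pure strategy Nash equilibrium of the game `G` with minority share `α`
and true preference vectors `θAstar`, `θDstar`: both strategies are unit vectors, and each is
a best response (payoffs are inner products of the aggregate with the true vectors). -/
def IsNashEq (α : ℝ) (θAstar θDstar θA' θD' : EuclideanSpace ℝ (Fin 2)) : Prop :=
  ‖θA'‖ = 1 ∧ ‖θD'‖ = 1 ∧
  (∀ θA : EuclideanSpace ℝ (Fin 2), ‖θA‖ = 1 →
    (inner ℝ (aggregate α θA θD') θAstar : ℝ) ≤ (inner ℝ (aggregate α θA' θD') θAstar : ℝ)) ∧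
  (∀ θD : EuclideanSpace ℝ (Fin 2), ‖θD‖ = 1 →
    (inner ℝ (aggregate α θA' θD) θDstar : ℝ) ≤ (inner ℝ (aggregate α θA' θD') θDstar : ℝ))

/-- Rotation by `π/2`: `R(x, y) = (−y, x)`. -/
noncomputable def Rot (x : EuclideanSpace ℝ (Fin 2)) : EuclideanSpace ℝ (Fin 2) :=
  (WithLp.equiv 2 (Fin 2 → ℝ)).symm ![-(x 1), x 0]

open Module

local notation "ℝ²" => EuclideanSpace ℝ (Fin 2)

/-- `(√(x² + w²) - x) / w` is the tangent of half the angle between `(1, 0)` and `(x, -w)`; the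
hypotheses put `(x, -w)` in the sector between the directions of angle `0` and
`-2 arctan (α / r)`, so that half-angle is at most `arctan (α / r)`. -/
lemma mul_sqrt_sq_add_sq_sub_le {α r x w : ℝ} (hα : 0 < α) (hr : 0 < r) (hw : 0 ≤ w)
    (hcone : (r ^ 2 - α ^ 2) * w ≤ 2 * α * r * x) :
    r * (√(x ^ 2 + w ^ 2) - x) ≤ α * w := by
  have hrhs : 0 ≤ α * w + r * x := by
    have : 0 ≤ 2 * α * (α * w + r * x) := by nlinarith
    exact nonneg_of_mul_nonneg_right (by linarith) (by linarith : (0 : ℝ) < 2 * α)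
  have hsq : (r * √(x ^ 2 + w ^ 2)) ^ 2 ≤ (α * w + r * x) ^ 2 := by
    rw [mul_pow, Real.sq_sqrt (by positivity)]
    nlinarith [mul_nonneg hw (sub_nonneg.2 hcone)]
  have := (pow_le_pow_iff_left₀ (by positivity) hrhs two_ne_zero).1 hsq
  linarith

lemma mul_sub_mul_le_mul_of_mul_sub_le {α r c τ x w N : ℝ} (hr : 0 < r) (hw : 0 ≤ w)
    (hτ : 0 ≤ τ) (hxN : x ≤ N) (hN : r * (N - x) ≤ α * w) (hc : -(α * c) ≤ τ * r) :
    c * x - τ * w ≤ c * N := by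
  rcases le_or_gt 0 c with hc0 | hc0
  · nlinarith [mul_le_mul_of_nonneg_left hxN hc0, mul_nonneg hτ hw]
  · have : 0 ≤ r * (c * N - c * x + τ * w) := by
      nlinarith [mul_le_mul_of_nonpos_left hN hc0.le,
        mul_nonneg hw (by linarith : 0 ≤ α * c + τ * r)]
    nlinarith [nonneg_of_mul_nonneg_right this hr]

/-- The defender's payoff inequality in an orthonormal frame: `(p, q)` is the deviation,
`(α p + r, -α (1 - q))` the resulting unnormalised aggregate, `(c, τ)` the true preference. -/
lemma mul_sub_mul_le_mul_sqrt {α r c τ p q : ℝ} (hα : 0 < α) (hr : 0 < r)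
    (hpq : p ^ 2 + q ^ 2 = 1) (hτ : 0 ≤ τ) (hc : -(α * c) ≤ τ * r) :
    c * (α * p + r) - τ * (α * (1 - q)) ≤ c * √((α * p + r) ^ 2 + (α * (1 - q)) ^ 2) := by
  have hq : q ≤ 1 := by nlinarith
  -- Cauchy–Schwarz for `(p, q)` and `(2 α r, r² - α²)`, a vector of norm `r² + α²`
  have hcs := abs_le_of_sq_le_sq' (a := 2 * α * r * p + (r ^ 2 - α ^ 2) * q)
    (b := r ^ 2 + α ^ 2) (by nlinarith [sq_nonneg ((r ^ 2 - α ^ 2) * p - 2 * α * r * q)])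
    (by positivity)
  refine mul_sub_mul_le_mul_of_mul_sub_le hr (by nlinarith) hτ ?_ ?_ hc
  · exact Real.le_sqrt_of_sq_le (by nlinarith)
  · exact mul_sqrt_sq_add_sq_sub_le hα hr (by nlinarith) (by nlinarith)

lemma neg_lt_sqrt_of_arccos_lt_pi_sub_arcsin {c x : ℝ} (hx : 0 ≤ x)
    (h : arccos c < π - arcsin x) : -c < √(1 - x ^ 2) := by
  rw [arcsin_eq_arccos hx, ← arccos_neg] at h
  by_contra! h'
  exact h.not_ge (arccos_le_arccos (by linarith))

lemma neg_mul_lt_abs_mul_sqrt_of_arccos_lt {α c t : ℝ} (hα : 0 < α) (hα' : α < 1 / 2)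
    (hct : c ^ 2 + t ^ 2 = 1) (h : arccos c < π - arcsin (α / (1 - α))) :
    -(α * c) < |t| * √(1 - 2 * α) := by
  have h1α : 0 < 1 - α := by linarith
  set r := √(1 - 2 * α)
  have hr : 0 < r := Real.sqrt_pos.2 (by linarith)
  have hr2 : r ^ 2 = 1 - 2 * α := Real.sq_sqrt (by linarith)
  have hcos : √(1 - (α / (1 - α)) ^ 2) = r / (1 - α) := by
    rw [show 1 - (α / (1 - α)) ^ 2 = (r / (1 - α)) ^ 2 by field_simp; linear_combination -hr2]
    exact Real.sqrt_sq (by positivity)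
  have hc : -((1 - α) * c) < r := by
    have := neg_lt_sqrt_of_arccos_lt_pi_sub_arcsin (by positivity) h
    rw [hcos, lt_div_iff₀ h1α] at this
    linarith
  rcases le_or_gt 0 c with hc0 | hc0
  · rcases hc0.eq_or_lt with rfl | hc0
    · have ht : |t| = 1 :=
        (pow_left_inj₀ (abs_nonneg t) zero_le_one two_ne_zero).1 (by rw [sq_abs]; linarith)
      simpa [ht] using hr
    · nlinarith [mul_nonneg (abs_nonneg t) hr.le]
  · rw [← pow_lt_pow_iff_left₀ (by nlinarith) (by positivity) two_ne_zero, mul_pow, sq_abs, hr2]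
    nlinarith [mul_self_lt_mul_self (by nlinarith) hc]

lemma inner_Rot_self_right (x : ℝ²) : (inner ℝ x (Rot x) : ℝ) = 0 := by
  simp [Rot, PiLp.inner_apply, Fin.sum_univ_two]
  ring

lemma norm_Rot (x : ℝ²) : ‖Rot x‖ = ‖x‖ := by
  simp [Rot, EuclideanSpace.norm_eq, Fin.sum_univ_two, add_comm]

lemma Real.sign_mul_self_eq_abs (t : ℝ) : Real.sign t * t = |t| := by
  rcases lt_trichotomy t 0 with h | rfl | h
  · rw [Real.sign_of_neg h, abs_of_neg h, neg_one_mul]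
  · simp
  · rw [Real.sign_of_pos h, abs_of_pos h, one_mul]

lemma Real.abs_sign_of_ne_zero {t : ℝ} (ht : t ≠ 0) : |Real.sign t| = 1 := by
  rcases Real.sign_apply_eq_of_ne_zero t ht with h | h <;> simp [h]

lemma real_inner_eq_of_orthonormal_pair {E : Type*} [NormedAddCommGroup E]
    [InnerProductSpace ℝ E] (hE : finrank ℝ E = 2) {e f : E} (he : ‖e‖ = 1) (hf : ‖f‖ = 1)
    (hef : (inner ℝ e f : ℝ) = 0) (x y : E) :
    (inner ℝ x y : ℝ) = inner ℝ x e * inner ℝ y e + inner ℝ x f * inner ℝ y f := by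
  have hon : Orthonormal ℝ ![e, f] := by
    rw [orthonormal_iff_ite]
    intro i j
    have hfe : (inner ℝ f e : ℝ) = 0 := by rw [real_inner_comm]; exact hef
    fin_cases i <;> fin_cases j <;> simp [he, hf, hef, hfe]
  let b := (basisOfOrthonormalOfCardEqFinrank hon (by simp [hE])).toOrthonormalBasis
    (by simpa using hon)
  rw [← b.sum_inner_mul_inner x y]
  simp [b, Fin.sum_univ_two, real_inner_comm]

lemma one_sub_two_mul_le_norm_smul_add_smul {E : Type*} [SeminormedAddCommGroup E]
    [NormedSpace ℝ E] {α : ℝ} (h0 : 0 ≤ α) (h1 : α ≤ 1) {z w : E} (hz : ‖z‖ = 1)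
    (hw : ‖w‖ = 1) : 1 - 2 * α ≤ ‖α • z + (1 - α) • w‖ := by
  calc 1 - 2 * α = ‖(1 - α) • w‖ - ‖α • z‖ := by
        rw [norm_smul, norm_smul, hz, hw, Real.norm_of_nonneg h0,
          Real.norm_of_nonneg (sub_nonneg.2 h1)]
        ring
    _ ≤ ‖(1 - α) • w + α • z‖ := norm_sub_le_norm_add _ _
    _ = ‖α • z + (1 - α) • w‖ := by rw [add_comm]

noncomputable def nashStrategyA (α : ℝ) (e f : ℝ²) : ℝ² :=
  (1 - α)⁻¹ • (√(1 - 2 * α) • e - α • f)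

section Equilibrium

variable {α : ℝ} {e f : ℝ²}

lemma smul_add_smul_nashStrategyA (hα : α < 1) (θD : ℝ²) :
    α • θD + (1 - α) • nashStrategyA α e f = α • θD + √(1 - 2 * α) • e - α • f := by
  rw [nashStrategyA, smul_smul, mul_inv_cancel₀ (by linarith), one_smul, add_sub_assoc]

lemma aggregate_nashStrategyA (hα : α < 1 / 2) (he : ‖e‖ = 1) :
    aggregate α (nashStrategyA α e f) f = e := by
  have hr : 0 < √(1 - 2 * α) := Real.sqrt_pos.2 (by linarith)
  rw [aggregate, smul_add_smul_nashStrategyA (by linarith), add_sub_cancel_left, norm_smul, he,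
    mul_one, Real.norm_of_nonneg hr.le, smul_smul, inv_mul_cancel₀ hr.ne', one_smul]

lemma norm_nashStrategyA (hα : α < 1 / 2) (he : ‖e‖ = 1) (hf : ‖f‖ = 1)
    (hef : (inner ℝ e f : ℝ) = 0) : ‖nashStrategyA α e f‖ = 1 := by
  have hsq : ‖√(1 - 2 * α) • e - α • f‖ ^ 2 = (1 - α) ^ 2 := by
    rw [norm_sub_sq_real, real_inner_smul_left, real_inner_smul_right, hef, norm_smul, norm_smul,
      he, hf, Real.norm_eq_abs, Real.norm_eq_abs, mul_pow, mul_pow, sq_abs, sq_abs,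
      Real.sq_sqrt (by linarith)]
    ring
  rw [nashStrategyA, norm_smul, (pow_left_inj₀ (norm_nonneg _) (by linarith) two_ne_zero).1 hsq,
    Real.norm_of_nonneg (inv_nonneg.2 (by linarith)), inv_mul_cancel₀ (by linarith)]

lemma inner_aggregate_le_one (he : ‖e‖ = 1) (θA θD : ℝ²) :
    (inner ℝ (aggregate α θA θD) e : ℝ) ≤ 1 := by
  refine (real_inner_le_norm _ _).trans ?_
  rw [aggregate, norm_smul, he, mul_one, norm_inv, norm_norm]
  exact inv_mul_le_one_of_le₀ le_rfl (norm_nonneg _)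

lemma inner_aggregate_nashStrategyA_le {d : ℝ²} (hα : 0 < α) (hα' : α < 1 / 2)
    (he : ‖e‖ = 1) (hf : ‖f‖ = 1) (hef : (inner ℝ e f : ℝ) = 0) (hτ : 0 ≤ (inner ℝ d f : ℝ))
    (hc : -(α * inner ℝ e d) ≤ inner ℝ d f * √(1 - 2 * α)) {θD : ℝ²} (hθD : ‖θD‖ = 1) :
    (inner ℝ (aggregate α (nashStrategyA α e f) θD) d : ℝ) ≤ inner ℝ e d := by
  have parseval := real_inner_eq_of_orthonormal_pair finrank_euclideanSpace_fin he hf hef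
  set r := √(1 - 2 * α)
  set v := α • θD + (1 - α) • nashStrategyA α e f
  have hv : v = α • θD + r • e - α • f := smul_add_smul_nashStrategyA (by linarith) θD
  set p : ℝ := inner ℝ θD e
  set q : ℝ := inner ℝ θD f
  have hfe : (inner ℝ f e : ℝ) = 0 := by rw [real_inner_comm]; exact hef
  have hpq : p ^ 2 + q ^ 2 = 1 := by
    have := parseval θD θD
    rw [real_inner_self_eq_norm_sq, hθD] at this
    linear_combination -this
  have hve : (inner ℝ v e : ℝ) = α * p + r := by
    simp [hv, inner_sub_left, inner_add_left, real_inner_smul_left, hfe, he, p]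
  have hvf : (inner ℝ v f : ℝ) = -(α * (1 - q)) := by
    simp [hv, inner_sub_left, inner_add_left, real_inner_smul_left, hef, hf, q]
    ring
  have hnorm : ‖v‖ = √((α * p + r) ^ 2 + (α * (1 - q)) ^ 2) := by
    rw [← Real.sqrt_sq (norm_nonneg v), ← real_inner_self_eq_norm_sq, parseval, hve, hvf]
    ring_nf
  have hvd : (inner ℝ v d : ℝ) = inner ℝ e d * (α * p + r) - inner ℝ d f * (α * (1 - q)) := by
    rw [parseval, hve, hvf, real_inner_comm e d]
    ring
  have hv0 : 0 < ‖v‖ := by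
    have := one_sub_two_mul_le_norm_smul_add_smul hα.le (by linarith) hθD
      (norm_nashStrategyA hα' he hf hef)
    linarith
  have key : (inner ℝ v d : ℝ) ≤ inner ℝ e d * ‖v‖ := by
    rw [hvd, hnorm]
    exact mul_sub_mul_le_mul_sqrt hα (Real.sqrt_pos.2 (by linarith)) hpq hτ hc
  change (inner ℝ (‖v‖⁻¹ • v) d : ℝ) ≤ _
  rw [real_inner_smul_left, inv_mul_le_iff₀ hv0]
  linarith

theorem isNashEq_nashStrategyA {d : ℝ²} (hα : 0 < α) (hα' : α < 1 / 2)
    (he : ‖e‖ = 1) (hf : ‖f‖ = 1) (hef : (inner ℝ e f : ℝ) = 0) (hτ : 0 ≤ (inner ℝ d f : ℝ))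
    (hc : -(α * inner ℝ e d) ≤ inner ℝ d f * √(1 - 2 * α)) :
    IsNashEq α e d (nashStrategyA α e f) f := by
  refine ⟨norm_nashStrategyA hα' he hf hef, hf, fun θA _ => ?_, fun θD hθD => ?_⟩
  · rw [aggregate_nashStrategyA hα' he, real_inner_self_eq_norm_sq, he, one_pow]
    exact inner_aggregate_le_one he θA f
  · rw [aggregate_nashStrategyA hα' he]
    exact inner_aggregate_nashStrategyA_le hα hα' he hf hef hτ hc hθD

end Equilibrium

/-- Theorem 2 (existence/sufficiency): if `∠(θ*_A, θ*_D) < π − arcsin(α/(1−α))`, then with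
`s = sign(⟪θ*_D, R θ*_A⟫)`, the pair `θ'_D = s • R θ*_A`,
`θ'_A = (√(1 − 2α) θ*_A − αs • R θ*_A)/(1 − α)` is a pure strategy Nash equilibrium. -/
theorem stmt_12 (α : ℝ) (hα : 0 < α) (hα' : α < 1 / 2)
    (θAstar θDstar : EuclideanSpace ℝ (Fin 2))
    (hAs : ‖θAstar‖ = 1) (hDs : ‖θDstar‖ = 1) (hne : θAstar ≠ θDstar)
    (hangle : Real.arccos (inner ℝ θAstar θDstar : ℝ) < Real.pi - Real.arcsin (α / (1 - α))) :
    Real.sign (inner ℝ θDstar (Rot θAstar) : ℝ) ≠ 0 ∧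
    ‖(1 - α)⁻¹ • (Real.sqrt (1 - 2 * α) • θAstar -
        (α * Real.sign (inner ℝ θDstar (Rot θAstar) : ℝ)) • Rot θAstar)‖ = 1 ∧
    ‖Real.sign (inner ℝ θDstar (Rot θAstar) : ℝ) • Rot θAstar‖ = 1 ∧
    IsNashEq α θAstar θDstar
      ((1 - α)⁻¹ • (Real.sqrt (1 - 2 * α) • θAstar -
        (α * Real.sign (inner ℝ θDstar (Rot θAstar) : ℝ)) • Rot θAstar))
      (Real.sign (inner ℝ θDstar (Rot θAstar) : ℝ) • Rot θAstar) := by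
  set t : ℝ := inner ℝ θDstar (Rot θAstar)
  have hRot : ‖Rot θAstar‖ = 1 := (norm_Rot θAstar).trans hAs
  have hct : (inner ℝ θAstar θDstar : ℝ) ^ 2 + t ^ 2 = 1 := by
    have := real_inner_eq_of_orthonormal_pair finrank_euclideanSpace_fin hAs hRot
      (inner_Rot_self_right θAstar) θDstar θDstar
    rw [real_inner_self_eq_norm_sq, hDs, real_inner_comm θAstar θDstar] at this
    linear_combination -this
  have hc := neg_mul_lt_abs_mul_sqrt_of_arccos_lt hα hα' hct hangle
  have ht : t ≠ 0 := by
    rintro ht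
    rw [ht, abs_zero, zero_mul] at hc
    have hc1 : (inner ℝ θAstar θDstar : ℝ) = 1 := by nlinarith
    exact hne ((inner_eq_one_iff_of_norm_eq_one hAs hDs).1 hc1)
  set f := Real.sign t • Rot θAstar
  have hf : ‖f‖ = 1 := by
    rw [norm_smul, Real.norm_eq_abs, Real.abs_sign_of_ne_zero ht, one_mul, hRot]
  have hef : (inner ℝ θAstar f : ℝ) = 0 := by
    rw [real_inner_smul_right, inner_Rot_self_right, mul_zero]
  have hτ : (inner ℝ θDstar f : ℝ) = |t| := by
    rw [real_inner_smul_right, Real.sign_mul_self_eq_abs]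
  rw [mul_smul]
  refine ⟨Real.sign_eq_zero_iff.not.2 ht, norm_nashStrategyA hα' hAs hf hef, hf, ?_⟩
  exact isNashEq_nashStrategyA hα hα' hAs hf hef (hτ ▸ abs_nonneg t) (hτ ▸ hc.le)
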